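/- arXiv:2201.06110 — 4 statements merged into one kernel-verified Lean document; each statement's English description precedes it below -/
import Mathlib

section
/- Let q ∈ ℕ, Ξ > 0 and ς > 2. Let b, c : ℕ → ℝ^q be sequences of vectors satisfying |b_ℓ|_2 ≤ Ξ(1+ℓ)^{−ς} and |c_ℓ|_2 ≤ Ξ(1+ℓ)^{−ς} for all ℓ ≥ 0. Then for every integer h ≥ 0 the series ∑_{ℓ=0}^∞ ⟨b_ℓ, c_{ℓ+h}⟩ converges absolutely and |∑_{ℓ=0}^∞ ⟨b_ℓ, c_{ℓ+h}⟩| ≤ Ξ² (∑_{ℓ=0}^∞ (1+ℓ)^{−ς}) (1+h)^{−ς}. Consequently, for every integer m ≥ 1, ∑_{h>m} |∑_{ℓ=0}^∞ ⟨b_ℓ, c_{ℓ+h}⟩| ≤ Ξ² (∑_{ℓ=0}^∞ (1+ℓ)^{−ς}) (1+m)^{1−ς}/(ς−1). -/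
/-!
Cauchy–Schwarz and monotonicity of the weights give
`|⟪b ℓ, c (ℓ + h)⟫| ≤ Ξ² (1 + ℓ)^(-ς) (1 + h)^(-ς)`, so the lag-`h` series is dominated by
`Ξ² (∑ (1 + ℓ)^(-ς)) (1 + h)^(-ς)`; summing this over `h > m` and comparing with
`∫_{m+1}^∞ x^(-ς) dx = (1 + m)^(1-ς) / (ς - 1)` gives the tail bound.
-/

open scoped RealInnerProductSpace

theorem tsum_subtype_nat_lt_eq_tsum_add {α : Type*} [AddCommMonoid α]
    [TopologicalSpace α] (f : ℕ → α) (m : ℕ) :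
    ∑' h : {h : ℕ // m < h}, f h = ∑' n : ℕ, f (n + m + 1) := by
  refine (Function.Injective.tsum_eq (g := fun n : ℕ => (⟨n + m + 1, by omega⟩ : {h // m < h}))
    (fun a b hab => by simpa using congrArg Subtype.val hab) ?_).symm
  rintro ⟨h, hh⟩ -
  exact ⟨h - (m + 1), Subtype.ext (by simp only; omega)⟩

theorem summable_one_add_nat_rpow_neg {ς : ℝ} (hς : 1 < ς) :
    Summable fun ℓ : ℕ => (1 + (ℓ : ℝ)) ^ (-ς) :=
  ((summable_nat_add_iff 1).2 (Real.summable_nat_rpow.2 (neg_lt_neg hς))).congr fun n => by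
    push_cast; ring_nf

theorem antitone_one_add_nat_rpow_neg {ς : ℝ} (hς : 0 ≤ ς) :
    Antitone fun ℓ : ℕ => (1 + (ℓ : ℝ)) ^ (-ς) :=
  fun _ _ hab => Real.rpow_le_rpow_of_nonpos (by positivity) (by gcongr) (by linarith)

theorem tsum_one_add_nat_rpow_neg_gt_le {ς : ℝ} (hς : 1 < ς) (m : ℕ) :
    ∑' h : {h : ℕ // m < h}, (1 + ((h : ℕ) : ℝ)) ^ (-ς) ≤ (1 + (m : ℝ)) ^ (1 - ς) / (ς - 1) := by
  have hm : (0 : ℝ) < ((m + 1 : ℕ) : ℝ) := by positivity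
  have integral_test := AntitoneOn.tsum_comp_add_le_integral (f := fun x : ℝ => x ^ (-ς)) (m + 1)
    (fun x hx y _ hxy => Real.rpow_le_rpow_of_nonpos (hm.trans_le hx) hxy (by linarith))
    (integrableOn_Ioi_rpow_of_lt (by linarith) hm)
    (fun x hx => Real.rpow_nonneg (hm.trans hx).le _)
  rw [integral_Ioi_rpow_of_lt (by linarith) hm] at integral_test
  rw [tsum_subtype_nat_lt_eq_tsum_add fun h : ℕ => (1 + (h : ℝ)) ^ (-ς)]
  convert integral_test using 1
  · congr 1 with n
    push_cast; ring_nf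
  · rw [neg_div, ← div_neg]
    push_cast; ring_nf

section LaggedInner

variable {E : Type*} [NormedAddCommGroup E] [InnerProductSpace ℝ E] {b c : ℕ → E} {u v : ℕ → ℝ}

theorem abs_inner_shift_le (hb : ∀ ℓ, ‖b ℓ‖ ≤ u ℓ) (hc : ∀ ℓ, ‖c ℓ‖ ≤ v ℓ) (hv : Antitone v)
    (ℓ h : ℕ) : |⟪b ℓ, c (ℓ + h)⟫| ≤ u ℓ * v h :=
  calc |⟪b ℓ, c (ℓ + h)⟫| ≤ ‖b ℓ‖ * ‖c (ℓ + h)‖ := abs_real_inner_le_norm _ _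
    _ ≤ u ℓ * v h := mul_le_mul (hb ℓ) ((hc _).trans (hv (Nat.le_add_left h ℓ)))
        (norm_nonneg _) ((norm_nonneg _).trans (hb ℓ))

theorem summable_abs_inner_shift (hb : ∀ ℓ, ‖b ℓ‖ ≤ u ℓ) (hc : ∀ ℓ, ‖c ℓ‖ ≤ v ℓ)
    (hv : Antitone v) (hu : Summable u) (h : ℕ) :
    Summable fun ℓ => |⟪b ℓ, c (ℓ + h)⟫| :=
  (hu.mul_right (v h)).of_nonneg_of_le (fun _ => abs_nonneg _) (abs_inner_shift_le hb hc hv · h)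

theorem abs_tsum_inner_shift_le (hb : ∀ ℓ, ‖b ℓ‖ ≤ u ℓ) (hc : ∀ ℓ, ‖c ℓ‖ ≤ v ℓ)
    (hv : Antitone v) (hu : Summable u) (h : ℕ) :
    |∑' ℓ, ⟪b ℓ, c (ℓ + h)⟫| ≤ (∑' ℓ, u ℓ) * v h :=
  calc |∑' ℓ, ⟪b ℓ, c (ℓ + h)⟫| ≤ ∑' ℓ, |⟪b ℓ, c (ℓ + h)⟫| := by
        simpa only [Real.norm_eq_abs] using norm_tsum_le_tsum_norm (f := fun ℓ => ⟪b ℓ, c (ℓ + h)⟫)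
          (by simpa only [Real.norm_eq_abs] using summable_abs_inner_shift hb hc hv hu h)
    _ ≤ ∑' ℓ, u ℓ * v h := (summable_abs_inner_shift hb hc hv hu h).tsum_le_tsum
        (abs_inner_shift_le hb hc hv · h) (hu.mul_right _)
    _ = (∑' ℓ, u ℓ) * v h := tsum_mul_right

end LaggedInner

theorem stmt1_general (q : ℕ) (Ξ ς : ℝ) (hς : 2 < ς)
    (b c : ℕ → EuclideanSpace ℝ (Fin q))
    (hb : ∀ ℓ : ℕ, ‖b ℓ‖ ≤ Ξ * (1 + (ℓ : ℝ)) ^ (-ς))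
    (hc : ∀ ℓ : ℕ, ‖c ℓ‖ ≤ Ξ * (1 + (ℓ : ℝ)) ^ (-ς)) :
    (∀ h : ℕ,
      Summable (fun ℓ : ℕ => |(⟪b ℓ, c (ℓ + h)⟫)|) ∧
      |(∑' ℓ : ℕ, ⟪b ℓ, c (ℓ + h)⟫)| ≤
        Ξ ^ 2 * (∑' ℓ : ℕ, (1 + (ℓ : ℝ)) ^ (-ς)) * (1 + (h : ℝ)) ^ (-ς)) ∧
    (∀ m : ℕ, 1 ≤ m →
      Summable (fun h : {h : ℕ // m < h} => |(∑' ℓ : ℕ, ⟪b ℓ, c (ℓ + (h : ℕ))⟫)|) ∧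
      (∑' h : {h : ℕ // m < h}, |(∑' ℓ : ℕ, ⟪b ℓ, c (ℓ + (h : ℕ))⟫)|) ≤
        Ξ ^ 2 * (∑' ℓ : ℕ, (1 + (ℓ : ℝ)) ^ (-ς)) * (1 + (m : ℝ)) ^ (1 - ς) / (ς - 1)) := by
  have hΞ : 0 ≤ Ξ := by simpa using (norm_nonneg _).trans (hb 0)
  set w : ℕ → ℝ := fun ℓ => (1 + (ℓ : ℝ)) ^ (-ς)
  have hw : Summable w := summable_one_add_nat_rpow_neg (by linarith)
  have hΞw : Antitone fun ℓ => Ξ * w ℓ := fun _ _ hab =>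
    mul_le_mul_of_nonneg_left (antitone_one_add_nat_rpow_neg (by linarith) hab) hΞ
  have hlag (h : ℕ) : |∑' ℓ, ⟪b ℓ, c (ℓ + h)⟫| ≤ Ξ ^ 2 * (∑' ℓ, w ℓ) * w h :=
    (abs_tsum_inner_shift_le hb hc hΞw (hw.mul_left Ξ) h).trans_eq (by rw [tsum_mul_left]; ring)
  refine ⟨fun h => ⟨summable_abs_inner_shift hb hc hΞw (hw.mul_left Ξ) h, hlag h⟩, fun m _ => ?_⟩
  have hdom : Summable fun h : {h // m < h} => Ξ ^ 2 * (∑' ℓ, w ℓ) * w h :=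
    (hw.subtype _).mul_left _
  have hsum : Summable fun h : {h // m < h} => |∑' ℓ, ⟪b ℓ, c (ℓ + h)⟫| :=
    hdom.of_nonneg_of_le (fun _ => abs_nonneg _) (fun h => hlag h)
  refine ⟨hsum, ?_⟩
  calc _ ≤ ∑' h : {h // m < h}, Ξ ^ 2 * (∑' ℓ, w ℓ) * w h :=
        hsum.tsum_le_tsum (fun h => hlag h) hdom
    _ = Ξ ^ 2 * (∑' ℓ, w ℓ) * ∑' h : {h // m < h}, w h := tsum_mul_left
    _ ≤ Ξ ^ 2 * (∑' ℓ, w ℓ) * ((1 + (m : ℝ)) ^ (1 - ς) / (ς - 1)) := by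
        gcongr
        exact tsum_one_add_nat_rpow_neg_gt_le (by linarith) m
    _ = _ := (mul_div_assoc _ _ _).symm

theorem stmt1 (q : ℕ) (Ξ ς : ℝ) (hΞ : 0 < Ξ) (hς : 2 < ς)
    (b c : ℕ → EuclideanSpace ℝ (Fin q))
    (hb : ∀ ℓ : ℕ, ‖b ℓ‖ ≤ Ξ * (1 + (ℓ : ℝ)) ^ (-ς))
    (hc : ∀ ℓ : ℕ, ‖c ℓ‖ ≤ Ξ * (1 + (ℓ : ℝ)) ^ (-ς)) :
    (∀ h : ℕ,
      Summable (fun ℓ : ℕ => |(⟪b ℓ, c (ℓ + h)⟫)|) ∧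
      |(∑' ℓ : ℕ, ⟪b ℓ, c (ℓ + h)⟫)| ≤
        Ξ ^ 2 * (∑' ℓ : ℕ, (1 + (ℓ : ℝ)) ^ (-ς)) * (1 + (h : ℝ)) ^ (-ς)) ∧
    (∀ m : ℕ, 1 ≤ m →
      Summable (fun h : {h : ℕ // m < h} => |(∑' ℓ : ℕ, ⟪b ℓ, c (ℓ + (h : ℕ))⟫)|) ∧
      (∑' h : {h : ℕ // m < h}, |(∑' ℓ : ℕ, ⟪b ℓ, c (ℓ + (h : ℕ))⟫)|) ≤
        Ξ ^ 2 * (∑' ℓ : ℕ, (1 + (ℓ : ℝ)) ^ (-ς)) * (1 + (m : ℝ)) ^ (1 - ς) / (ς - 1)) :=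
  stmt1_general q Ξ ς hς b c hb hc
end

section
/- Let N ∈ ℕ, let Ĝ ∈ ℝ^{N×N} be symmetric positive semi-definite, ĝ ∈ ℝ^N, λ > 0, and let β ∈ ℝ^N satisfy |Ĝβ − ĝ|_∞ ≤ λ/4. Let β̂ be any global minimizer over m ∈ ℝ^N of m^⊤Ĝm − 2m^⊤ĝ + λ|m|_1. Set v := β̂ − β, S := {i : β_i ≠ 0}, and let v_S (resp. v_{S^c}) agree with v on S (resp. on the complement of S) and vanish elsewhere. Then v^⊤ Ĝ v ≤ (λ/2)(3|v_S|_1 − |v_{S^c}|_1); in particular |v_{S^c}|_1 ≤ 3|v_S|_1 and |v|_1 ≤ 4√(|S|) |v|_2. -/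
/-!
Comparing the objective at the minimiser `β̂` with its value at `β` gives the basic inequality
`vᵀĜv ≤ 2 vᵀ(ĝ - Ĝβ) + λ(|β|₁ - |β̂|₁)` for `v = β̂ - β`. The deviation bound controls the
cross term by `(λ/2)|v|₁`, and since `β` vanishes off `S`, `|β|₁ - |β̂|₁ ≤ |v_S|₁ - |v_{Sᶜ}|₁`.
Positivity of `vᵀĜv` then forces the cone condition, and Cauchy–Schwarz on `S` gives the
`ℓ₁`–`ℓ₂` comparison.
-/

open Matrix
open scoped Classical

open Finset

section

variable {ι : Type*} [Fintype ι]

theorem Matrix.IsSymm.dotProduct_mulVec_comm {A : Matrix ι ι ℝ} (hA : A.IsSymm) (x y : ι → ℝ) :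
    x ⬝ᵥ A *ᵥ y = y ⬝ᵥ A *ᵥ x := by
  rw [dotProduct_mulVec, ← mulVec_transpose, hA.eq, dotProduct_comm]

theorem Matrix.IsSymm.dotProduct_mulVec_sub {A : Matrix ι ι ℝ} (hA : A.IsSymm) (x y : ι → ℝ) :
    (x - y) ⬝ᵥ A *ᵥ (x - y) = x ⬝ᵥ A *ᵥ x - 2 * (x ⬝ᵥ A *ᵥ y) + y ⬝ᵥ A *ᵥ y := by
  simp only [mulVec_sub, dotProduct_sub, sub_dotProduct, hA.dotProduct_mulVec_comm y x]
  ring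

def lassoObjective (G : Matrix ι ι ℝ) (g : ι → ℝ) (lam : ℝ) (m : ι → ℝ) : ℝ :=
  m ⬝ᵥ G *ᵥ m - 2 * (m ⬝ᵥ g) + lam * ∑ i, |m i|

theorem dotProduct_mulVec_sub_le_of_lassoObjective_le {G : Matrix ι ι ℝ} (hG : G.IsSymm)
    {g : ι → ℝ} {lam : ℝ} {b β : ι → ℝ} (hb : lassoObjective G g lam b ≤ lassoObjective G g lam β) :
    (b - β) ⬝ᵥ G *ᵥ (b - β) ≤
      2 * ((b - β) ⬝ᵥ (g - G *ᵥ β)) + lam * (∑ i, |β i| - ∑ i, |b i|) := by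
  rw [hG.dotProduct_mulVec_sub]
  simp only [lassoObjective, dotProduct_sub, sub_dotProduct] at hb ⊢
  linarith

theorem dotProduct_le_mul_sum_abs {v w : ι → ℝ} {c : ℝ} (hw : ∀ i, |w i| ≤ c) :
    v ⬝ᵥ w ≤ c * ∑ i, |v i| := by
  rw [mul_sum]
  refine sum_le_sum fun i _ => ?_
  calc v i * w i ≤ |v i| * |w i| := by rw [← abs_mul]; exact le_abs_self _
    _ ≤ |v i| * c := mul_le_mul_of_nonneg_left (hw i) (abs_nonneg _)
    _ = c * |v i| := mul_comm _ _

theorem sum_abs_sub_sum_abs_le [DecidableEq ι] {b β : ι → ℝ} (S : Finset ι)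
    (hβ : ∀ i ∉ S, β i = 0) :
    ∑ i, |β i| - ∑ i, |b i| ≤ ∑ i ∈ S, |(b - β) i| - ∑ i ∈ Sᶜ, |(b - β) i| := by
  have hS : ∀ i ∈ S, |β i| - |b i| ≤ |(b - β) i| := fun i _ => by
    simpa [abs_sub_comm] using abs_sub_abs_le_abs_sub (β i) (b i)
  have hSc : ∀ i ∈ Sᶜ, |β i| - |b i| = -|(b - β) i| := fun i hi => by
    simp [hβ i (mem_compl.mp hi)]
  rw [← sum_sub_distrib, ← sum_add_sum_compl S, sub_eq_add_neg, ← sum_neg_distrib,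
    sum_congr rfl hSc]
  linarith [sum_le_sum hS]

theorem sum_abs_le_sqrt_card_mul_sqrt_sum_sq (v : ι → ℝ) (S : Finset ι) :
    ∑ i ∈ S, |v i| ≤ √(#S) * √(∑ i, v i ^ 2) := by
  calc ∑ i ∈ S, |v i| = ∑ i ∈ S, 1 * |v i| := by simp
    _ ≤ √(∑ i ∈ S, 1 ^ 2) * √(∑ i ∈ S, |v i| ^ 2) := Real.sum_mul_le_sqrt_mul_sqrt S _ _
    _ ≤ √(#S) * √(∑ i, v i ^ 2) := by
      simp only [one_pow, sum_const, nsmul_eq_mul, mul_one, sq_abs]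
      gcongr
      exact subset_univ S

theorem sum_abs_le_four_sqrt_card_mul_of_cone [DecidableEq ι] {v : ι → ℝ} {S : Finset ι}
    (hcone : ∑ i ∈ Sᶜ, |v i| ≤ 3 * ∑ i ∈ S, |v i|) :
    ∑ i, |v i| ≤ 4 * √(#S) * √(∑ i, v i ^ 2) := by
  rw [← sum_add_sum_compl S]
  linarith [sum_abs_le_sqrt_card_mul_sqrt_sum_sq v S]

end

theorem stmt6 (N : ℕ) (Ghat : Matrix (Fin N) (Fin N) ℝ) (hGhat : Ghat.PosSemidef)
    (ghat : Fin N → ℝ) (lam : ℝ) (hlam : 0 < lam) (β βhat : Fin N → ℝ)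
    (hdev : ∀ i, |Ghat.mulVec β i - ghat i| ≤ lam / 4)
    (hmin : ∀ m : Fin N → ℝ,
      βhat ⬝ᵥ Ghat.mulVec βhat - 2 * (βhat ⬝ᵥ ghat) + lam * ∑ i, |βhat i| ≤
        m ⬝ᵥ Ghat.mulVec m - 2 * (m ⬝ᵥ ghat) + lam * ∑ i, |m i|) :
    (βhat - β) ⬝ᵥ Ghat.mulVec (βhat - β) ≤
      lam / 2 * (3 * (∑ i ∈ Finset.univ.filter (fun i => β i ≠ 0), |(βhat - β) i|) -
        ∑ i ∈ (Finset.univ.filter (fun i => β i ≠ 0))ᶜ, |(βhat - β) i|) ∧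
    (∑ i ∈ (Finset.univ.filter (fun i => β i ≠ 0))ᶜ, |(βhat - β) i|) ≤
      3 * ∑ i ∈ Finset.univ.filter (fun i => β i ≠ 0), |(βhat - β) i| ∧
    (∑ i, |(βhat - β) i|) ≤
      4 * Real.sqrt ((Finset.univ.filter (fun i => β i ≠ 0)).card) *
        Real.sqrt (∑ i, ((βhat - β) i) ^ 2) := by
  set S := univ.filter fun i => β i ≠ 0
  have hsymm : Ghat.IsSymm := isSymm_conjTranspose_iff.mp (congrArg transpose hGhat.1)
  have hbasic := dotProduct_mulVec_sub_le_of_lassoObjective_le hsymm (hmin β)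
  have hcross : (βhat - β) ⬝ᵥ (ghat - Ghat *ᵥ β) ≤ lam / 4 * ∑ i, |(βhat - β) i| :=
    dotProduct_le_mul_sum_abs fun i => by simpa [abs_sub_comm] using hdev i
  have hl1 := mul_le_mul_of_nonneg_left
    (sum_abs_sub_sum_abs_le (b := βhat) S fun i hi => by simpa [S] using hi) hlam.le
  rw [← sum_add_sum_compl S] at hcross
  have hmain : (βhat - β) ⬝ᵥ Ghat *ᵥ (βhat - β) ≤
      lam / 2 * (3 * ∑ i ∈ S, |(βhat - β) i| - ∑ i ∈ Sᶜ, |(βhat - β) i|) := by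
    linarith
  have hnonneg : 0 ≤ (βhat - β) ⬝ᵥ Ghat *ᵥ (βhat - β) := by
    simpa using hGhat.dotProduct_mulVec_nonneg (βhat - β)
  have hcone : ∑ i ∈ Sᶜ, |(βhat - β) i| ≤ 3 * ∑ i ∈ S, |(βhat - β) i| := by
    have := (mul_nonneg_iff_of_pos_left (half_pos hlam)).mp (hnonneg.trans hmain)
    linarith
  exact ⟨hmain, hcone, sum_abs_le_four_sqrt_card_mul_of_cone hcone⟩
end

section
/- Let p, d ∈ ℕ, let G ∈ ℝ^{pd×pd} be symmetric and invertible, g ∈ ℝ^{pd×p}, and β := G^{−1}g. Let Ĝ, ĝ satisfy |Ĝ − G|_∞ ≤ δ and |ĝ − g|_∞ ≤ δ for some δ > 0, and let λ ≥ (‖β‖_1 + 1)δ. For each 1 ≤ j ≤ p let β̂_{·j} be a solution of: minimize |m|_1 over m ∈ ℝ^{pd} subject to |Ĝm − ĝ_{·j}|_∞ ≤ λ (the feasible set is nonempty since β_{·j} is feasible). Then: (a) |β̂_{·j}|_1 ≤ |β_{·j}|_1 for every j; (b) max_{1≤j≤p} |β̂_{·j} − β_{·j}|_∞ ≤ 2‖G^{−1}‖_1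 λ; and (c) for every ϱ ∈ [0,1), ∑_{j=1}^p |β̂_{·j} − β_{·j}|_1 ≤ 6 s_0(ϱ) (‖G^{−1}‖_1 λ)^{1−ϱ}, where s_0(ϱ) := ∑_{j} ∑_{i} |β_{ij}|^ϱ with the convention 0^0 = 0. -/
/-!
The true column `β_{·j}` is feasible, because `Ĝ β_{·j} − ĝ_{·j} = (Ĝ − G) β_{·j} + (g − ĝ)_{·j}`
has entries at most `(‖β‖₁ + 1) δ ≤ λ`; minimality of `β̂_{·j}` then gives (a). The residual
`G (β̂ − β)_{·j} = (G − Ĝ) β̂_{·j} + (Ĝ β̂_{·j} − ĝ_{·j}) + (ĝ − g)_{·j}` has entries at most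
`δ ‖β‖₁ + λ + δ ≤ 2λ` by (a), and applying `G⁻¹`, whose row sums are its column sums by symmetry,
gives (b).

For (c), all reals `b, b̂` satisfy `|b̂ − b| ≤ |b̂| − |b| + 2 min(|b|, |b̂ − b|)`. Summing over a
column and using the cone condition (a) gives `|β̂_{·j} − β_{·j}|₁ ≤ 2 ∑ᵢ min(|βᵢⱼ|, 2ε)
≤ 4 ∑ᵢ min(|βᵢⱼ|, ε)` with `ε = ‖G⁻¹‖₁ λ` by (b), and `min(|x|, ε) ≤ ε^{1−ϱ} |x|^ϱ`.
-/

open Matrix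
open scoped Classical

/-- Maximum absolute column-sum norm `‖M‖₁ = max_j ∑_i |M i j|`. -/
noncomputable def colOneNorm {a b : ℕ} (M : Matrix (Fin a) (Fin b) ℝ) : ℝ :=
  ⨆ j : Fin b, ∑ i, |M i j|

section ColOneNorm

variable {a b : ℕ}

lemma sum_abs_le_colOneNorm (M : Matrix (Fin a) (Fin b) ℝ) (j : Fin b) :
    ∑ i, |M i j| ≤ colOneNorm M :=
  le_ciSup (f := fun j => ∑ i, |M i j|) (Set.finite_range _).bddAbove j

lemma colOneNorm_nonneg (M : Matrix (Fin a) (Fin b) ℝ) : 0 ≤ colOneNorm M :=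
  Real.iSup_nonneg fun _ => Finset.sum_nonneg fun _ _ => abs_nonneg _

lemma Matrix.IsHermitian.sum_abs_row_le_colOneNorm {M : Matrix (Fin a) (Fin a) ℝ}
    (hM : M.IsHermitian) (i : Fin a) : ∑ k, |M i k| ≤ colOneNorm M := by
  simpa only [← hM.apply i, star_trivial] using sum_abs_le_colOneNorm M i

end ColOneNorm

section Perturbation

variable {m n : Type*} [Fintype n]

lemma abs_mulVec_le_of_abs_le {A : Matrix m n ℝ} {δ : ℝ} (hA : ∀ i k, |A i k| ≤ δ)
    (v : n → ℝ) (i : m) : |(A *ᵥ v) i| ≤ δ * ∑ k, |v k| := by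
  rw [Finset.mul_sum]
  refine (Finset.abs_sum_le_sum_abs _ _).trans (Finset.sum_le_sum fun k _ => ?_)
  rw [abs_mul]
  exact mul_le_mul_of_nonneg_right (hA i k) (abs_nonneg _)

variable {G Ghat : Matrix m n ℝ} {c chat : m → ℝ} {δ : ℝ}

lemma abs_mulVec_sub_le_of_mulVec_eq (hGd : ∀ i k, |Ghat i k - G i k| ≤ δ)
    (hcd : ∀ i, |chat i - c i| ≤ δ) {b : n → ℝ} (hb : G *ᵥ b = c) (i : m) :
    |(Ghat *ᵥ b) i - chat i| ≤ (∑ k, |b k| + 1) * δ := by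
  have hsplit : (Ghat *ᵥ b) i - chat i = ((Ghat - G) *ᵥ b) i - (chat i - c i) := by
    rw [sub_mulVec, hb]; simp only [Pi.sub_apply]; ring
  have hmul := abs_mulVec_le_of_abs_le (A := Ghat - G) hGd b i
  rw [hsplit]
  linarith [abs_sub _ _ |>.trans (add_le_add hmul (hcd i))]

lemma abs_mulVec_sub_le_of_feasible (hGd : ∀ i k, |Ghat i k - G i k| ≤ δ)
    (hcd : ∀ i, |chat i - c i| ≤ δ) {b bhat : n → ℝ} (hb : G *ᵥ b = c) {lam : ℝ}
    (hbhat : ∀ i, |(Ghat *ᵥ bhat) i - chat i| ≤ lam) (i : m) :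
    |(G *ᵥ (bhat - b)) i| ≤ δ * ∑ k, |bhat k| + lam + δ := by
  have hsplit : (G *ᵥ (bhat - b)) i =
      ((G - Ghat) *ᵥ bhat) i + ((Ghat *ᵥ bhat) i - chat i) + (chat i - c i) := by
    rw [mulVec_sub, sub_mulVec, hb]; simp only [Pi.sub_apply]; ring
  have hmul := abs_mulVec_le_of_abs_le (A := G - Ghat)
    (fun i k => by rw [Matrix.sub_apply, abs_sub_comm]; exact hGd i k) bhat i
  rw [hsplit]
  linarith [abs_add_three (((G - Ghat) *ᵥ bhat) i) ((Ghat *ᵥ bhat) i - chat i) (chat i - c i),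
    hbhat i, hcd i]

end Perturbation

lemma abs_le_sum_abs_inv_mul_of_abs_mulVec_le {n : Type*} [Fintype n] [DecidableEq n]
    {G : Matrix n n ℝ} (hG : IsUnit G) {v : n → ℝ} {r : ℝ} (hv : ∀ k, |(G *ᵥ v) k| ≤ r)
    (i : n) : |v i| ≤ (∑ k, |G⁻¹ i k|) * r := by
  have hv_eq : v = G⁻¹ *ᵥ (G *ᵥ v) := by
    rw [mulVec_mulVec, nonsing_inv_mul G ((isUnit_iff_isUnit_det G).mp hG), one_mulVec]
  rw [hv_eq, Finset.sum_mul]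
  refine (Finset.abs_sum_le_sum_abs _ _).trans (Finset.sum_le_sum fun k _ => ?_)
  rw [abs_mul]
  exact mul_le_mul_of_nonneg_left (hv k) (abs_nonneg _)

section WeakSparsity

lemma abs_sub_le_abs_sub_abs_add_two_mul_min (b bhat : ℝ) :
    |bhat - b| ≤ |bhat| - |b| + 2 * min |b| |bhat - b| := by
  rcases le_total |b| |bhat - b| with h | h
  · rw [min_eq_left h]
    linarith [abs_sub bhat b]
  · rw [min_eq_right h]
    linarith [abs_sub_abs_le_abs_sub b bhat, abs_sub_comm b bhat]

variable {n : Type*} [Fintype n]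

lemma sum_abs_sub_le_two_mul_sum_min {b bhat : n → ℝ} (hcone : ∑ i, |bhat i| ≤ ∑ i, |b i|) :
    ∑ i, |bhat i - b i| ≤ 2 * ∑ i, min |b i| |bhat i - b i| := by
  have hsum := Finset.sum_le_sum fun i (_ : i ∈ Finset.univ) =>
    abs_sub_le_abs_sub_abs_add_two_mul_min (b i) (bhat i)
  rw [Finset.sum_add_distrib, Finset.sum_sub_distrib, ← Finset.mul_sum] at hsum
  linarith

lemma min_abs_le_rpow_mul {ε ϱ : ℝ} (hε : 0 ≤ ε) (hϱ0 : 0 ≤ ϱ) (hϱ1 : ϱ ≤ 1) (x : ℝ) :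
    min |x| ε ≤ ε ^ (1 - ϱ) * if x = 0 then 0 else |x| ^ ϱ := by
  have hfactor : ∀ y : ℝ, 0 ≤ y → y = y ^ (1 - ϱ) * y ^ ϱ := fun y hy => by
    rw [← Real.rpow_add' hy (by norm_num), sub_add_cancel, Real.rpow_one]
  split_ifs with hx
  · simp [hx, hε]
  rcases le_total |x| ε with h | h
  · rw [min_eq_left h]
    calc |x| = |x| ^ (1 - ϱ) * |x| ^ ϱ := hfactor _ (abs_nonneg x)
      _ ≤ ε ^ (1 - ϱ) * |x| ^ ϱ := by gcongr
  · rw [min_eq_right h]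
    calc ε = ε ^ (1 - ϱ) * ε ^ ϱ := hfactor _ hε
      _ ≤ ε ^ (1 - ϱ) * |x| ^ ϱ := by gcongr

lemma sum_abs_sub_le_four_mul_rpow_mul_sum_rpow {b bhat : n → ℝ} {ε ϱ : ℝ} (hε : 0 ≤ ε)
    (hϱ0 : 0 ≤ ϱ) (hϱ1 : ϱ ≤ 1) (hcone : ∑ i, |bhat i| ≤ ∑ i, |b i|)
    (hdev : ∀ i, |bhat i - b i| ≤ 2 * ε) :
    ∑ i, |bhat i - b i| ≤ 4 * ε ^ (1 - ϱ) * ∑ i, if b i = 0 then 0 else |b i| ^ ϱ := by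
  have hmin : ∀ i, min |b i| |bhat i - b i| ≤ 2 * min |b i| ε := fun i =>
    calc min |b i| |bhat i - b i| ≤ min |b i| (2 * ε) := min_le_min_left _ (hdev i)
      _ ≤ 2 * min |b i| ε := by
        rw [mul_min_of_nonneg _ _ zero_le_two]
        exact min_le_min_right _ (by linarith [abs_nonneg (b i)])
  calc ∑ i, |bhat i - b i| ≤ 2 * ∑ i, min |b i| |bhat i - b i| :=
        sum_abs_sub_le_two_mul_sum_min hcone
    _ ≤ 2 * ∑ i, 2 * (ε ^ (1 - ϱ) * if b i = 0 then 0 else |b i| ^ ϱ) := by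
        gcongr with i
        exact (hmin i).trans (by gcongr; exact min_abs_le_rpow_mul hε hϱ0 hϱ1 (b i))
    _ = 4 * ε ^ (1 - ϱ) * ∑ i, if b i = 0 then 0 else |b i| ^ ϱ := by
        rw [← Finset.mul_sum, ← Finset.mul_sum]; ring

end WeakSparsity

theorem stmt10 (p d : ℕ) (δ lam : ℝ) (hδ : 0 < δ)
    (G : Matrix (Fin (p * d)) (Fin (p * d)) ℝ) (hG : G.IsHermitian) (hGu : IsUnit G)
    (g β : Matrix (Fin (p * d)) (Fin p) ℝ) (hβ : β = G⁻¹ * g)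
    (Ghat : Matrix (Fin (p * d)) (Fin (p * d)) ℝ)
    (ghat : Matrix (Fin (p * d)) (Fin p) ℝ)
    (hGd : ∀ i j, |Ghat i j - G i j| ≤ δ) (hgd : ∀ i j, |ghat i j - g i j| ≤ δ)
    (hlam : (colOneNorm β + 1) * δ ≤ lam)
    (βhat : Matrix (Fin (p * d)) (Fin p) ℝ)
    (hfeas : ∀ j i, |Ghat.mulVec (fun k => βhat k j) i - ghat i j| ≤ lam)
    (hmin : ∀ j (m : Fin (p * d) → ℝ),
      (∀ i, |Ghat.mulVec m i - ghat i j| ≤ lam) → (∑ i, |βhat i j|) ≤ ∑ i, |m i|) :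
    (∀ j, (∑ i, |βhat i j|) ≤ ∑ i, |β i j|) ∧
    (∀ j i, |βhat i j - β i j| ≤ 2 * colOneNorm G⁻¹ * lam) ∧
    (∀ ϱ : ℝ, 0 ≤ ϱ → ϱ < 1 →
      (∑ j, ∑ i, |βhat i j - β i j|) ≤
        6 * (∑ j, ∑ i, if β i j = 0 then (0 : ℝ) else |β i j| ^ ϱ) *
          (colOneNorm G⁻¹ * lam) ^ (1 - ϱ)) := by
  have hGβ : ∀ j, G *ᵥ (fun k => β k j) = fun i => g i j := fun j => by
    have hGβ_mat : G * β = g := by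
      rw [hβ, ← Matrix.mul_assoc, mul_nonsing_inv G ((isUnit_iff_isUnit_det G).mp hGu),
        Matrix.one_mul]
    ext i
    rw [← hGβ_mat]
    rfl
  have hβcol : ∀ j, ∑ k, |β k j| ≤ colOneNorm β := sum_abs_le_colOneNorm β
  have hlam0 : 0 ≤ lam := (mul_nonneg (by linarith [colOneNorm_nonneg β]) hδ.le).trans hlam
  have ha : ∀ j, ∑ i, |βhat i j| ≤ ∑ i, |β i j| := fun j =>
    hmin j _ fun i => (abs_mulVec_sub_le_of_mulVec_eq hGd (hgd · j) (hGβ j) i).trans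
      (hlam.trans' (by gcongr; exact hβcol j))
  have hres : ∀ j k, |(G *ᵥ ((fun k => βhat k j) - fun k => β k j)) k| ≤ 2 * lam := fun j k =>
    (abs_mulVec_sub_le_of_feasible hGd (hgd · j) (hGβ j) (hfeas j) k).trans
      (by nlinarith [mul_le_mul_of_nonneg_left ((ha j).trans (hβcol j)) hδ.le])
  have hb : ∀ j i, |βhat i j - β i j| ≤ 2 * colOneNorm G⁻¹ * lam := fun j i =>
    calc |βhat i j - β i j| ≤ (∑ k, |G⁻¹ i k|) * (2 * lam) :=
          abs_le_sum_abs_inv_mul_of_abs_mulVec_le hGu (hres j) i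
      _ ≤ colOneNorm G⁻¹ * (2 * lam) := by
          gcongr
          exact hG.inv.sum_abs_row_le_colOneNorm i
      _ = 2 * colOneNorm G⁻¹ * lam := by ring
  refine ⟨ha, hb, fun ϱ hϱ0 hϱ1 => ?_⟩
  set ε := colOneNorm G⁻¹ * lam
  have hε : 0 ≤ ε := mul_nonneg (colOneNorm_nonneg _) hlam0
  calc ∑ j, ∑ i, |βhat i j - β i j|
      ≤ ∑ j, 4 * ε ^ (1 - ϱ) * ∑ i, if β i j = 0 then (0 : ℝ) else |β i j| ^ ϱ :=
        Finset.sum_le_sum fun j _ => sum_abs_sub_le_four_mul_rpow_mul_sum_rpow hε hϱ0 hϱ1.le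
          (ha j) fun i => by linarith [hb j i]
    _ ≤ 6 * (∑ j, ∑ i, if β i j = 0 then (0 : ℝ) else |β i j| ^ ϱ) * ε ^ (1 - ϱ) := by
        rw [← Finset.mul_sum]
        have hs : 0 ≤ ∑ j, ∑ i, if β i j = 0 then (0 : ℝ) else |β i j| ^ ϱ := by positivity
        nlinarith [Real.rpow_nonneg hε (1 - ϱ)]
end

section
/- Let p, d ∈ ℕ and γ̄, δ, ε ≥ 0. Let Γ_ξ(ℓ) ∈ ℝ^{p×p} for 0 ≤ ℓ ≤ d satisfy max_{0≤ℓ≤d} |Γ_ξ(ℓ)|_∞ ≤ γ̄, and let Γ̂_ξ(ℓ) ∈ ℝ^{p×p} satisfy max_{0≤ℓ≤d} |Γ̂_ξ(ℓ) − Γ_ξ(ℓ)|_∞ ≤ δ. Let β, β̂ ∈ ℝ^{pd×p} with ‖β̂ − β‖_1 ≤ ε. Define the stacked matrices g := [Γ_ξ(1); …; Γ_ξ(d)] ∈ ℝ^{pd×p} and ĝ := [Γ̂_ξ(1); …; Γ̂_ξ(d)], and the innovation-covariance estimates Γ := Γ_ξ(0) − β^⊤g and Γ̂ := Γ̂_ξ(0)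 − β̂^⊤ĝ. Then |Γ̂ − Γ|_∞ ≤ δ + ε(γ̄ + δ) + ‖β‖_1 δ. -/
open Matrix

/-- Maximum absolute column-sum norm over a general finite index type. -/
noncomputable def colOneNorm' {a : Type*} [Fintype a] {b : ℕ}
    (M : Matrix a (Fin b) ℝ) : ℝ :=
  ⨆ j : Fin b, ∑ i, |M i j|

theorem stmt11 (p d : ℕ) (γbar δ ε : ℝ) (hγbar : 0 ≤ γbar) (hδ : 0 ≤ δ) (hε : 0 ≤ ε)
    (Γ Γhat : ℕ → Matrix (Fin p) (Fin p) ℝ)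
    (hΓb : ∀ ℓ ≤ d, ∀ i j, |Γ ℓ i j| ≤ γbar)
    (hΓd : ∀ ℓ ≤ d, ∀ i j, |Γhat ℓ i j - Γ ℓ i j| ≤ δ)
    (β βhat : Matrix (Fin d × Fin p) (Fin p) ℝ)
    (hβd : ∀ j, (∑ x : Fin d × Fin p, |βhat x j - β x j|) ≤ ε) :
    ∀ i j,
      |(Γhat 0 - βhatᵀ * (Matrix.of fun (x : Fin d × Fin p) j' => Γhat ((x.1 : ℕ) + 1) x.2 j')) i j -
        (Γ 0 - βᵀ * (Matrix.of fun (x : Fin d × Fin p) j' => Γ ((x.1 : ℕ) + 1) x.2 j')) i j| ≤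
      δ + ε * (γbar + δ) + colOneNorm' β * δ := by
  intro i j
  have hle : ∀ x : Fin d × Fin p, (x.1 : ℕ) + 1 ≤ d := fun x => x.1.isLt
  have hg : ∀ x : Fin d × Fin p, ∀ j' : Fin p,
      |Γhat ((x.1 : ℕ) + 1) x.2 j'| ≤ γbar + δ := by
    intro x j'
    have h1 := hΓb ((x.1 : ℕ) + 1) (hle x) x.2 j'
    have h2 := hΓd ((x.1 : ℕ) + 1) (hle x) x.2 j'
    calc |Γhat ((x.1 : ℕ) + 1) x.2 j'|
        = |Γ ((x.1 : ℕ) + 1) x.2 j' + (Γhat ((x.1 : ℕ) + 1) x.2 j' - Γ ((x.1 : ℕ) + 1) x.2 j')| := by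
          ring_nf
      _ ≤ _ := (abs_add_le _ _).trans (add_le_add h1 h2)
  simp only [Matrix.sub_apply, Matrix.mul_apply, Matrix.transpose_apply, Matrix.of_apply]
  have key : (Γhat 0 i j - ∑ x, βhat x i * Γhat ((x.1 : ℕ) + 1) x.2 j) -
      (Γ 0 i j - ∑ x, β x i * Γ ((x.1 : ℕ) + 1) x.2 j) =
      (Γhat 0 i j - Γ 0 i j) -
      ((∑ x, (βhat x i - β x i) * Γhat ((x.1 : ℕ) + 1) x.2 j) +
        ∑ x, β x i * (Γhat ((x.1 : ℕ) + 1) x.2 j - Γ ((x.1 : ℕ) + 1) x.2 j)) := by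
    have hsum : ((∑ x, (βhat x i - β x i) * Γhat ((x.1 : ℕ) + 1) x.2 j) +
        ∑ x, β x i * (Γhat ((x.1 : ℕ) + 1) x.2 j - Γ ((x.1 : ℕ) + 1) x.2 j)) =
        (∑ x, βhat x i * Γhat ((x.1 : ℕ) + 1) x.2 j) -
          ∑ x, β x i * Γ ((x.1 : ℕ) + 1) x.2 j := by
      rw [← Finset.sum_add_distrib, ← Finset.sum_sub_distrib]
      apply Finset.sum_congr rfl
      intro x _
      ring
    rw [hsum]
    ring
  rw [key]
  have b1 : |Γhat 0 i j - Γ 0 i j| ≤ δ := hΓd 0 (Nat.zero_le d) i j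
  have b2 : |∑ x, (βhat x i - β x i) * Γhat ((x.1 : ℕ) + 1) x.2 j| ≤ ε * (γbar + δ) := by
    calc |∑ x, (βhat x i - β x i) * Γhat ((x.1 : ℕ) + 1) x.2 j|
        ≤ ∑ x, |(βhat x i - β x i) * Γhat ((x.1 : ℕ) + 1) x.2 j| :=
          Finset.abs_sum_le_sum_abs _ _
      _ ≤ ∑ x, |βhat x i - β x i| * (γbar + δ) := by
          apply Finset.sum_le_sum
          intro x _
          rw [abs_mul]
          exact mul_le_mul_of_nonneg_left (hg x j) (abs_nonneg _)
      _ = (∑ x, |βhat x i - β x i|) * (γbar + δ) := by rw [Finset.sum_mul]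
      _ ≤ ε * (γbar + δ) :=
          mul_le_mul_of_nonneg_right (hβd i) (by linarith)
  have b3 : |∑ x, β x i * (Γhat ((x.1 : ℕ) + 1) x.2 j - Γ ((x.1 : ℕ) + 1) x.2 j)| ≤
      colOneNorm' β * δ := by
    have hcol : (∑ x, |β x i|) ≤ colOneNorm' β := by
      apply le_ciSup (f := fun j' : Fin p => ∑ x, |β x j'|)
      exact (Set.finite_range _).bddAbove
    calc |∑ x, β x i * (Γhat ((x.1 : ℕ) + 1) x.2 j - Γ ((x.1 : ℕ) + 1) x.2 j)|
        ≤ ∑ x, |β x i * (Γhat ((x.1 : ℕ) + 1) x.2 j - Γ ((x.1 : ℕ) + 1) x.2 j)| :=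
          Finset.abs_sum_le_sum_abs _ _
      _ ≤ ∑ x, |β x i| * δ := by
          apply Finset.sum_le_sum
          intro x _
          rw [abs_mul]
          exact mul_le_mul_of_nonneg_left (hΓd _ (hle x) x.2 j) (abs_nonneg _)
      _ = (∑ x, |β x i|) * δ := by rw [Finset.sum_mul]
      _ ≤ colOneNorm' β * δ := mul_le_mul_of_nonneg_right hcol hδ
  calc |(Γhat 0 i j - Γ 0 i j) -
        ((∑ x, (βhat x i - β x i) * Γhat ((x.1 : ℕ) + 1) x.2 j) +
          ∑ x, β x i * (Γhat ((x.1 : ℕ) + 1) x.2 j - Γ ((x.1 : ℕ) + 1) x.2 j))|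
      ≤ |Γhat 0 i j - Γ 0 i j| +
        |(∑ x, (βhat x i - β x i) * Γhat ((x.1 : ℕ) + 1) x.2 j) +
          ∑ x, β x i * (Γhat ((x.1 : ℕ) + 1) x.2 j - Γ ((x.1 : ℕ) + 1) x.2 j)| :=
        abs_sub _ _
    _ ≤ |Γhat 0 i j - Γ 0 i j| +
        (|∑ x, (βhat x i - β x i) * Γhat ((x.1 : ℕ) + 1) x.2 j| +
          |∑ x, β x i * (Γhat ((x.1 : ℕ) + 1) x.2 j - Γ ((x.1 : ℕ) + 1) x.2 j)|) := by
        gcongr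
        exact abs_add_le _ _
    _ ≤ δ + ε * (γbar + δ) + colOneNorm' β * δ := by
        rw [← add_assoc]; exact add_le_add (add_le_add b1 b2) b3
end
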